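/- arXiv:1402.2474 — 5 statements merged into one kernel-verified Lean document; each statement's English description precedes it below -/
import Mathlib

section
/- If A and B are both solutions, then their conjunction A ∧ B is a solution. (Hence the set of solutions modulo E-equivalence is closed under meet, forming a subalgebra of the meet-semilattice of the Lindenbaum–Tarski algebra.) -/
open FirstOrder FirstOrder.Language

/-- `A` is a *solution* (w.r.t. the fixed data `Γ`, `Δ`, `w̄₁,…,w̄_k`): the sequent
`(A → ⋀_{i=1}^k A[ᾱ\w̄ᵢ]), Γ ⟹ Δ` is E-valid, i.e. it holds in every (nonempty)
structure for the language under every assignment of the free variables `ᾱ`. -/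
def IsSolution {L : Language} {n k : ℕ} (Γ Δ : Finset (L.Formula (Fin n)))
    (w : Fin k → Fin n → L.Term Empty) (A : L.Formula (Fin n)) : Prop :=
  ∀ (M : Type) [L.Structure M] [Nonempty M] (v : Fin n → M),
    (Formula.Realize A v →
      ∀ i : Fin k, Formula.Realize (M := M) (A.subst (w i)) (fun x : Empty => x.elim)) →
    (∀ G ∈ Γ, Formula.Realize G v) → ∃ G ∈ Δ, Formula.Realize G v

/-- If `A` and `B` are both solutions, then their conjunction
`A ⊓ B` is a solution. -/
theorem isSolution_inf_of_isSolution {L : Language} {n k : ℕ} (hk : 1 ≤ k)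
    (Γ Δ : Finset (L.Formula (Fin n)))
    (hΓ : ∀ G ∈ Γ, BoundedFormula.IsQF G) (hΔ : ∀ G ∈ Δ, BoundedFormula.IsQF G)
    (w : Fin k → Fin n → L.Term Empty)
    (A B : L.Formula (Fin n)) (hA : BoundedFormula.IsQF A) (hB : BoundedFormula.IsQF B)
    (hsA : IsSolution Γ Δ w A) (hsB : IsSolution Γ Δ w B) :
    IsSolution Γ Δ w (A ⊓ B) := by
  intro M _ _ v h hΓ'
  simp only [Formula.realize_inf, Formula.Realize, BoundedFormula.realize_subst,
    BoundedFormula.realize_inf] at h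
  by_cases hAv : A.Realize v
  · by_cases hBv : B.Realize v
    · refine hsA M v (fun _ i => ?_) hΓ'
      have := (h ⟨hAv, hBv⟩ i).1
      simpa only [Formula.Realize, BoundedFormula.realize_subst] using this
    · exact hsB M v (fun hb => absurd hb hBv) hΓ'
  · exact hsA M v (fun ha => absurd ha hAv) hΓ'
end

section
/- The set of solutions is convex with respect to E-entailment: if A and B are solutions, G is a quantifier-free formula with free variables among ᾱ, A ⊨_E G and G ⊨_E B, then G is a solution. -/
open FirstOrder FirstOrder.Language

/-- `F ⊨_E G`: the implication `F → G` is E-valid. -/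
def EEntails {L : Language} {α : Type} (F G : L.Formula α) : Prop :=
  ∀ (M : Type) [L.Structure M] [Nonempty M] (v : α → M),
    Formula.Realize F v → Formula.Realize G v

/-- The canonical formula `C = ⋀Γ ∧ ¬⋁Δ`. -/
noncomputable def canonicalFormula {L : Language} {n : ℕ} (Γ Δ : Finset (L.Formula (Fin n))) :
    L.Formula (Fin n) :=
  (Γ.toList.foldr (· ⊓ ·) ⊤) ⊓ ∼(Δ.toList.foldr (· ⊔ ·) ⊥)

/-- The set of solutions is convex with respect to E-entailment:
if `A` and `B` are solutions, `G` is a quantifier-free formula with free variables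
among `ᾱ`, `A ⊨_E G` and `G ⊨_E B`, then `G` is a solution. -/
theorem isSolution_of_between {L : Language} {n k : ℕ} (hk : 1 ≤ k)
    (Γ Δ : Finset (L.Formula (Fin n)))
    (hΓ : ∀ G ∈ Γ, BoundedFormula.IsQF G) (hΔ : ∀ G ∈ Δ, BoundedFormula.IsQF G)
    (w : Fin k → Fin n → L.Term Empty)
    (A B G : L.Formula (Fin n))
    (hA : BoundedFormula.IsQF A) (hB : BoundedFormula.IsQF B)
    (hG : BoundedFormula.IsQF G)
    (hsA : IsSolution Γ Δ w A) (hsB : IsSolution Γ Δ w B)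
    (hAG : EEntails A G) (hGB : EEntails G B) :
    IsSolution Γ Δ w G := by
  intro M _ _ v h hΓ'
  by_cases hGv : Formula.Realize G v
  · apply hsB M v _ hΓ'
    intro _ i
    have hGi := h hGv i
    rw [Formula.Realize, BoundedFormula.realize_subst] at hGi ⊢
    exact hGB M _ hGi
  · apply hsA M v _ hΓ'
    intro hAv
    exact absurd (hAG M v hAv) hGv
end

section
/- The canonical formula C = ⋀Γ ∧ ¬⋁Δ is a least element of the solution space with respect to E-entailment: for every solution A, C ⊨_E A, i.e., C → A is E-valid. -/
open FirstOrder FirstOrder.Language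

private lemma realize_foldr_inf' {L : Language} {α : Type} {M : Type} [L.Structure M]
    (l : List (L.Formula α)) (v : α → M) :
    Formula.Realize (l.foldr (· ⊓ ·) ⊤) v ↔ ∀ F ∈ l, Formula.Realize F v := by
  induction l with
  | nil => simp [Formula.Realize]
  | cons a t ih => simp [Formula.Realize, ih]

private lemma realize_foldr_sup' {L : Language} {α : Type} {M : Type} [L.Structure M]
    (l : List (L.Formula α)) (v : α → M) :
    Formula.Realize (l.foldr (· ⊔ ·) ⊥) v ↔ ∃ F ∈ l, Formula.Realize F v := by
  induction l with
  | nil => simp [Formula.Realize]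
  | cons a t ih => simp [Formula.realize_sup, ih]

/-- The canonical formula `C = ⋀Γ ∧ ¬⋁Δ` is a least element of the
solution space with respect to E-entailment: for every solution `A`, `C ⊨_E A`,
i.e. `C → A` is E-valid. -/
theorem canonicalFormula_eentails_solution {L : Language} {n k : ℕ} (hk : 1 ≤ k)
    (Γ Δ : Finset (L.Formula (Fin n)))
    (hΓ : ∀ G ∈ Γ, BoundedFormula.IsQF G) (hΔ : ∀ G ∈ Δ, BoundedFormula.IsQF G)
    (w : Fin k → Fin n → L.Term Empty)
    (A : L.Formula (Fin n)) (hA : BoundedFormula.IsQF A)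
    (hsA : IsSolution Γ Δ w A) :
    EEntails (canonicalFormula Γ Δ) A := by
  intro M _ _ v hC
  have hC' : Formula.Realize (Γ.toList.foldr (· ⊓ ·) ⊤) v ∧
      ¬ Formula.Realize (Δ.toList.foldr (· ⊔ ·) ⊥) v := by
    simpa [canonicalFormula, Formula.realize_inf, Formula.realize_not] using hC
  have hΓr : ∀ G ∈ Γ, Formula.Realize G v := by
    intro G hG
    exact (realize_foldr_inf' _ v).1 hC'.1 G (Finset.mem_toList.2 hG)
  by_contra hA'
  obtain ⟨G, hG, hGr⟩ := hsA M v (fun h => absurd h hA') hΓr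
  exact hC'.2 ((realize_foldr_sup' _ v).2 ⟨G, Finset.mem_toList.2 hG, hGr⟩)
end

section
/- Let A be a quantifier-free formula with free variables among ᾱ and let P be a quantifier-free formula containing no variable from ᾱ (so that P[ᾱ\w̄ᵢ] = P for each i). If the conjunction A ∧ P is a solution, then A is a solution. (Hence deleting ᾱ-free clauses from a solution in conjunctive normal form preserves the solution property, as in the first step of the solution-finding algorithm.) -/
open FirstOrder FirstOrder.Language

private lemma realize_indep_of_freeVarFinset_empty {L : Language} {n : ℕ}
    {P : L.Formula (Fin n)} (h : P.freeVarFinset = ∅)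
    {M : Type} [L.Structure M] (v v' : Fin n → M) :
    Formula.Realize P v ↔ Formula.Realize P v' := by
  have hsub : ↑P.freeVarFinset ⊆ (∅ : Set (Fin n)) := by simp [h]
  have e : (v ∘ (Subtype.val) : (∅ : Set (Fin n)) → M) = v' ∘ (Subtype.val) :=
    funext fun x => x.2.elim
  show BoundedFormula.Realize P v default ↔ BoundedFormula.Realize P v' default
  rw [← BoundedFormula.realize_restrictFreeVar' hsub (v := v), e,
    BoundedFormula.realize_restrictFreeVar' hsub]

/-- If `P` is a quantifier-free formula containing no variable from
`ᾱ` (its set of free variables is empty, so that `P[ᾱ\w̄ᵢ] = P` for each `i`) and the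
conjunction `A ∧ P` is a solution, then `A` is a solution. -/
theorem isSolution_of_inf_varFree {L : Language} {n k : ℕ} (hk : 1 ≤ k)
    (Γ Δ : Finset (L.Formula (Fin n)))
    (hΓ : ∀ G ∈ Γ, BoundedFormula.IsQF G) (hΔ : ∀ G ∈ Δ, BoundedFormula.IsQF G)
    (w : Fin k → Fin n → L.Term Empty)
    (A P : L.Formula (Fin n))
    (hA : BoundedFormula.IsQF A) (hP : BoundedFormula.IsQF P)
    (hPfree : P.freeVarFinset = ∅)
    (hs : IsSolution Γ Δ w (A ⊓ P)) :
    IsSolution Γ Δ w A := by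
  intro M _ _ v himp hΓ'
  by_cases hPr : Formula.Realize P v
  · refine hs M v (fun hAP i => ?_) hΓ'
    rw [Formula.realize_inf] at hAP
    have hA' := himp hAP.1 i
    rw [Formula.Realize, BoundedFormula.realize_subst] at hA' ⊢
    rw [BoundedFormula.realize_inf]
    refine ⟨hA', ?_⟩
    exact (realize_indep_of_freeVarFinset_empty hPfree _ v).mpr hPr
  · refine hs M v (fun hAP => absurd ?_ hPr) hΓ'
    exact (Formula.realize_inf.mp hAP).2
end

section
/- Let S: ∀x̄₁F₁,…,∀x̄_pF_p ⟹ ∃x̄_{p+1}F_{p+1},…,∃x̄_qF_q be a Σ₁-sequent over a first-order language L with equality, let ᾱ = (α₁,…,αₙ) be variables, let w̄₁,…,w̄_k be ground n-tuples of L-terms, and for each i let Uᵢ be a finite set of kᵢ-tuples of L-terms with variables among ᾱ; put Γ = { Fᵢ[x̄ᵢ\ū] : ū ∈ Uᵢ, 1 ≤ i ≤ p } and Δ = { Fᵢ[x̄ᵢ\ū] : ū ∈ Uᵢ, p+1 ≤ i ≤ q }. If there exists a quantifier-free formula A with free variables among ᾱ such that the sequent (A → ⋀_{i=1}^k A[ᾱ\w̄ᵢ]),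 Γ ⟹ Δ is E-valid (i.e., the schematic extended Herbrand sequent has a solution), then S is E-valid. (This is the semantic content of the construction of a proof of S with a single ∀-cut on the formula ∀x̄.A.) -/
open FirstOrder FirstOrder.Language

/-- Let `S` be the Σ₁-sequent
`∀x̄₁F₁,…,∀x̄_pF_p ⟹ ∃x̄_{p+1}F_{p+1},…,∃x̄_qF_q` (each `Fᵢ`/`Gⱼ` quantifier-free),
`ᾱ = (α₁,…,αₙ)` variables, `w̄₁,…,w̄_k` (`k ≥ 1`) ground `n`-tuples of terms, and for
each antecedent (resp. succedent) formula let `U i` (resp. `V j`) be a finite set of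
tuples of terms with variables among `ᾱ`; put `Γ = { Fᵢ[x̄ᵢ\ū] : ū ∈ U i }` and
`Δ = { Gⱼ[x̄ⱼ\ū] : ū ∈ V j }`.  If there is a quantifier-free formula `A` with free
variables among `ᾱ` such that the sequent `(A → ⋀_{i=1}^k A[ᾱ\w̄ᵢ]), Γ ⟹ Δ` is
E-valid (the schematic extended Herbrand sequent has a solution), then `S` is
E-valid. -/
theorem evalid_of_solution {L : Language} {p r n k : ℕ} (hk : 1 ≤ k)
    (ka : Fin p → ℕ) (kb : Fin r → ℕ)
    (F : ∀ i : Fin p, L.Formula (Fin (ka i))) (G : ∀ j : Fin r, L.Formula (Fin (kb j)))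
    (hF : ∀ i, BoundedFormula.IsQF (F i)) (hG : ∀ j, BoundedFormula.IsQF (G j))
    (U : ∀ i : Fin p, Finset (Fin (ka i) → L.Term (Fin n)))
    (V : ∀ j : Fin r, Finset (Fin (kb j) → L.Term (Fin n)))
    (w : Fin k → Fin n → L.Term Empty)
    (A : L.Formula (Fin n)) (hA : BoundedFormula.IsQF A)
    (hsol : ∀ (M : Type) [L.Structure M] [Nonempty M] (v : Fin n → M),
      (Formula.Realize A v →
        ∀ i : Fin k, Formula.Realize (M := M) (A.subst (w i)) (fun x : Empty => x.elim)) →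
      (∀ i, ∀ u ∈ U i, Formula.Realize ((F i).subst u) v) →
      ∃ j, ∃ u ∈ V j, Formula.Realize ((G j).subst u) v) :
    ∀ (M : Type) [L.Structure M] [Nonempty M],
      (∀ i (v : Fin (ka i) → M), Formula.Realize (F i) v) →
      ∃ j, ∃ v : Fin (kb j) → M, Formula.Realize (G j) v := by
  intro M _ _ hant
  have key : ∀ v : Fin n → M,
      (Formula.Realize A v →
        ∀ i : Fin k, Formula.Realize (M := M) (A.subst (w i)) (fun x : Empty => x.elim)) →
      ∃ j, ∃ vv : Fin (kb j) → M, Formula.Realize (G j) vv := by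
    intro v hcut
    obtain ⟨j, u, hu, hGu⟩ := hsol M v hcut (by
      intro i u hu
      simp only [Formula.Realize, BoundedFormula.realize_subst]
      exact hant i _)
    simp only [Formula.Realize, BoundedFormula.realize_subst] at hGu
    exact ⟨j, _, hGu⟩
  by_cases h : ∀ i : Fin k, Formula.Realize (M := M) (A.subst (w i)) (fun x : Empty => x.elim)
  · exact key (fun _ => Classical.arbitrary M) (fun _ => h)
  · push_neg at h
    obtain ⟨i, hi⟩ := h
    refine key (fun a => Term.realize (fun x : Empty => x.elim) (w i a)) ?_
    intro hAv
    exact absurd ((BoundedFormula.realize_subst).mpr hAv) hi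
end
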